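/- arXiv:2504.03644 — 2 statements merged into one kernel-verified Lean document; each statement's English description precedes it below -/
import Mathlib

section
/- Let G be a finite simple graph with adjacency matrix A over ℂ, and let (θ_1, …, θ_K; E_1, …, E_K) be a spectral decomposition of A. If G admits quantum fractional revival from a vertex u to a vertex v at some time t, then there exist complex numbers α and β with β ≠ 0 and |α|² + |β|² = 1 such that for each r ∈ {1, …, K} there is a sign ε_r ∈ {1, −1} with E_r e_v = ( −Re(α/β) + ε_r·√( (Re(α/β))² + 1 ) )·(E_r e_u). -/
/-!
Applying `E_r` to `H(t) e_u = α e_u + β e_v` and using `E_r H(t) = e^{itθ_r} E_r` gives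
`E_r e_v = λ_r E_r e_u` with `λ_r = (e^{itθ_r} - α) / β`. Because `A` is real symmetric, the
transposes `E_rᵀ` form another resolution of the identity into eigenprojections of `A`, so
`E_rᵀ = E_r`; with `E_r` Hermitian this makes `E_r` real, hence `λ_r` real when `E_r e_u ≠ 0`.
Unitarity of `H(t)` gives `|α|² + |β|² = 1`, and then `|α + β λ_r| = 1` is the quadratic
`λ_r² + 2 Re(α/β) λ_r - 1 = 0`.
-/

open Matrix

/-- The standard basis vector `e_u` in `ℂ^V`. -/
noncomputable def stdVec {V : Type*} (u : V) : V → ℂ :=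
  letI := Classical.decEq V
  Pi.single u 1

/-- The transition matrix `H(t) = exp(i t A)` of a graph with adjacency matrix `A`. -/
noncomputable def transMatrix {V : Type*} [Fintype V] (A : Matrix V V ℂ) (t : ℝ) :
    Matrix V V ℂ :=
  letI := Classical.decEq V
  NormedSpace.exp ((Complex.I * (t : ℂ)) • A)

/-- Quantum fractional revival from `u` to `v` at time `t`. -/
def hasQFR {V : Type*} [Fintype V] (A : Matrix V V ℂ) (u v : V) (t : ℝ) : Prop :=
  u ≠ v ∧ ∃ α β : ℂ, β ≠ 0 ∧
    (transMatrix A t) *ᵥ stdVec u = α • stdVec u + β • stdVec v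

/-- The unitary Cayley graph of a commutative ring: distinct `a, b` are adjacent
iff `a - b` is a unit. -/
def unitaryCayleyGraph (R : Type*) [CommRing R] : SimpleGraph R where
  Adj a b := a ≠ b ∧ IsUnit (a - b)
  symm := ⟨by
    rintro a b ⟨h1, h2⟩
    refine ⟨h1.symm, ?_⟩
    rw [← neg_sub]
    exact h2.neg⟩
  loopless := ⟨fun a h => h.1 rfl⟩

/-- The adjacency matrix (over `ℂ`) of the unitary Cayley graph of `R`. -/
noncomputable def ucMatrix (R : Type*) [CommRing R] : Matrix R R ℂ :=
  letI := Classical.decEq R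
  letI := Classical.decRel (unitaryCayleyGraph R).Adj
  (unitaryCayleyGraph R).adjMatrix ℂ

/-- The adjacency matrix (over `ℂ`) of a simple graph. -/
noncomputable def adjMat {V : Type*} (G : SimpleGraph V) : Matrix V V ℂ :=
  letI := Classical.decEq V
  letI := Classical.decRel G.Adj
  G.adjMatrix ℂ

section SpectralIdempotents

variable {ι 𝕜 R : Type*} [Fintype ι] [Field 𝕜] [Ring R] [Algebra 𝕜 R]

theorem OrthogonalIdempotents.mul_sum_smul {E : ι → R} (hE : OrthogonalIdempotents E)
    (θ : ι → 𝕜) (r : ι) : E r * ∑ s, θ s • E s = θ r • E r := by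
  classical
  rw [Finset.mul_sum, Finset.sum_eq_single r (fun s _ hs ↦ by
    rw [mul_smul_comm, hE.ortho hs.symm, smul_zero]) (by simp), mul_smul_comm, (hE.idem r).eq]

theorem eq_of_sum_eq_one_of_mul_eq_smul {E F : ι → R} {θ : ι → 𝕜} (hθ : Function.Injective θ)
    {a : R} (hE : ∑ r, E r = 1) (hF : ∑ s, F s = 1) (hEa : ∀ r, E r * a = θ r • E r)
    (haF : ∀ s, a * F s = θ s • F s) : E = F := by
  classical
  have hEF : ∀ r s, r ≠ s → E r * F s = 0 := by
    intro r s hrs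
    have h : (θ r - θ s) • (E r * F s) = 0 := by
      rw [sub_smul, ← smul_mul_assoc, ← hEa, ← mul_smul_comm, ← haF, mul_assoc, sub_self]
    exact (smul_eq_zero.mp h).resolve_left (sub_ne_zero.mpr (hθ.ne hrs))
  funext r
  calc E r = E r * ∑ s, F s := by rw [hF, mul_one]
    _ = E r * F r := by
      rw [Finset.mul_sum, Finset.sum_eq_single r (fun s _ hs ↦ hEF r s hs.symm) (by simp)]
    _ = (∑ s, E s) * F r := by
      rw [Finset.sum_mul, Finset.sum_eq_single r (fun s _ hs ↦ hEF s r hs) (by simp)]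
    _ = F r := by rw [hE, one_mul]

end SpectralIdempotents

namespace Matrix

variable {V : Type*} [Fintype V]

theorem star_mulVec_eq_self {α : Type*} [CommSemiring α] [StarRing α] {M : Matrix V V α}
    (hM : M.IsHermitian) (hMT : Mᵀ = M) {x : V → α} (hx : star x = x) :
    star (M *ᵥ x) = M *ᵥ x := by
  rw [star_mulVec, hx, hM.eq, ← mulVec_transpose, hMT]

variable [DecidableEq V]

theorem transpose_eq_self_of_sum_smul_eq {ι 𝕜 : Type*} [Fintype ι] [Field 𝕜] {A : Matrix V V 𝕜}
    (hA : Aᵀ = A) {E : ι → Matrix V V 𝕜} (hE : CompleteOrthogonalIdempotents E) {θ : ι → 𝕜}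
    (hθ : Function.Injective θ) (hspec : ∑ r, θ r • E r = A) (r : ι) : (E r)ᵀ = E r := by
  have hEA : ∀ r, E r * A = θ r • E r := fun r ↦ hspec ▸ hE.mul_sum_smul θ r
  refine (congrFun (eq_of_sum_eq_one_of_mul_eq_smul (F := fun s ↦ (E s)ᵀ) hθ hE.complete ?_ hEA ?_)
    r).symm
  · rw [← transpose_sum, hE.complete, transpose_one]
  · intro s
    rw [← hA, ← transpose_mul, hEA, transpose_smul]

theorem mul_exp_of_mul_eq_smul {P M : Matrix V V ℂ} {c : ℂ} (h : P * M = c • P) :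
    P * NormedSpace.exp M = Complex.exp c • P := by
  -- `exp` depends only on the topology, so any Banach-algebra norm gives access to the general API.
  let _ : NormedRing (Matrix V V ℂ) := Matrix.linftyOpNormedRing
  let _ : NormedAlgebra ℂ (Matrix V V ℂ) := Matrix.linftyOpNormedAlgebra
  let _ : NormedAlgebra ℚ (Matrix V V ℂ) := Matrix.linftyOpNormedAlgebra
  have hP : SemiconjBy P M (algebraMap ℂ _ c) := by
    rw [SemiconjBy, h, Algebra.smul_def]
  calc P * NormedSpace.exp M = NormedSpace.exp (algebraMap ℂ _ c) * P := hP.exp_right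
    _ = Complex.exp c • P := by
      rw [← NormedSpace.algebraMap_exp_comm, Algebra.smul_def, Complex.exp_eq_exp_ℂ]

theorem exp_I_mul_smul_mem_unitaryGroup {A : Matrix V V ℂ} (hA : A.IsHermitian) (t : ℝ) :
    NormedSpace.exp ((Complex.I * t) • A) ∈ unitaryGroup V ℂ := by
  set B := (Complex.I * t) • A
  have hB : star B = -B := by
    rw [star_smul, show star A = A from hA, ← neg_smul]
    simp
  rw [mem_unitaryGroup_iff', star_eq_conjTranspose, ← exp_conjTranspose, ← star_eq_conjTranspose,
    hB, ← exp_add_of_commute _ _ (Commute.refl B).neg_left, neg_add_cancel, NormedSpace.exp_zero]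

theorem norm_sq_add_norm_sq_eq_one_of_mulVec_single {U : Matrix V V ℂ}
    (hU : U ∈ unitaryGroup V ℂ) {u v : V} (huv : u ≠ v) {α β : ℂ}
    (h : U *ᵥ Pi.single u 1 = α • Pi.single u 1 + β • Pi.single v 1) :
    ‖α‖ ^ 2 + ‖β‖ ^ 2 = 1 := by
  have hcol : star (U *ᵥ Pi.single u 1) ⬝ᵥ (U *ᵥ Pi.single u 1) = 1 := by
    rw [star_mulVec, dotProduct_mulVec, vecMul_vecMul, ← star_eq_conjTranspose,
      mem_unitaryGroup_iff'.mp hU, vecMul_one, ← Pi.single_star, star_one, single_dotProduct,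
      Pi.single_eq_same, one_mul]
  rw [h] at hcol
  simp only [star_add, star_smul, add_dotProduct, dotProduct_add, smul_dotProduct, dotProduct_smul,
    ← Pi.single_star, star_one, single_dotProduct, Pi.single_eq_same, Pi.single_eq_of_ne huv,
    Pi.single_eq_of_ne huv.symm, smul_eq_mul, mul_one, mul_zero, add_zero, zero_add] at hcol
  rw [← starRingEnd_apply, ← starRingEnd_apply, Complex.mul_conj', Complex.mul_conj'] at hcol
  exact_mod_cast hcol

end Matrix

theorem star_eq_self_of_eq_smul {ι K : Type*} [Field K] [StarRing K] {x y : ι → K}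
    (hx : star x = x) (hy : star y = y) (hx0 : x ≠ 0) {c : K} (h : y = c • x) : star c = c := by
  obtain ⟨i, hi⟩ := Function.ne_iff.mp hx0
  have hyi : y i = c * x i := congrFun h i
  apply mul_right_cancel₀ hi
  calc star c * x i = star (y i) := by rw [hyi, star_mul', ← Pi.star_apply, hx]
    _ = c * x i := by rw [← Pi.star_apply, hy, hyi]

theorem quadratic_of_norm_add_mul_ofReal {α β : ℂ} (hβ : β ≠ 0) (hnorm : ‖α‖ ^ 2 + ‖β‖ ^ 2 = 1)
    {l : ℝ} (hl : ‖α + β * l‖ = 1) : l ^ 2 + 2 * (α / β).re * l - 1 = 0 := by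
  have hβ' : Complex.normSq β ≠ 0 := (Complex.normSq_pos.mpr hβ).ne'
  have hl' : ‖α + β * l‖ ^ 2 = 1 := by rw [hl, one_pow]
  rw [Complex.div_re]
  field_simp
  simp only [Complex.sq_norm, Complex.normSq_apply, Complex.add_re, Complex.add_im, Complex.mul_re,
    Complex.mul_im, Complex.ofReal_re, Complex.ofReal_im] at hl' hnorm ⊢
  linear_combination hl' - hnorm

theorem exists_sign_of_quadratic {c l : ℝ} (h : l ^ 2 + 2 * c * l - 1 = 0) :
    ∃ ε : ℝ, (ε = 1 ∨ ε = -1) ∧ l = -c + ε * √(c ^ 2 + 1) := by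
  have hs : √(c ^ 2 + 1) ^ 2 = c ^ 2 + 1 := Real.sq_sqrt (by positivity)
  rcases sq_eq_sq_iff_eq_or_eq_neg.mp (show (l + c) ^ 2 = √(c ^ 2 + 1) ^ 2 by
    rw [hs]; linear_combination h) with h' | h'
  · exact ⟨1, Or.inl rfl, by linarith⟩
  · exact ⟨-1, Or.inr rfl, by linarith⟩

theorem exists_sign_of_smul_eq_smul_add_smul {ι : Type*} {x y : ι → ℂ} (hx : star x = x)
    (hy : star y = y) {α β μ : ℂ} (hβ : β ≠ 0) (hnorm : ‖α‖ ^ 2 + ‖β‖ ^ 2 = 1) (hμ : ‖μ‖ = 1)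
    (h : μ • x = α • x + β • y) :
    ∃ ε : ℝ, (ε = 1 ∨ ε = -1) ∧
      y = ((-(α / β).re + ε * √((α / β).re ^ 2 + 1) : ℝ) : ℂ) • x := by
  have hyx : y = ((μ - α) / β) • x := by
    rw [div_eq_inv_mul, mul_smul, sub_smul, h, add_sub_cancel_left, smul_smul, inv_mul_cancel₀ hβ,
      one_smul]
  by_cases hx0 : x = 0
  · exact ⟨1, Or.inl rfl, by rw [hyx, hx0, smul_zero, smul_zero]⟩
  set l := (μ - α) / β
  have hl : (l.re : ℂ) = l := Complex.conj_eq_iff_re.mp (star_eq_self_of_eq_smul hx hy hx0 hyx)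
  have hμl : α + β * l.re = μ := by
    rw [hl, mul_div_cancel₀ _ hβ, add_sub_cancel]
  obtain ⟨ε, hε, hlε⟩ :=
    exists_sign_of_quadratic (quadratic_of_norm_add_mul_ofReal hβ hnorm (hμl ▸ hμ))
  exact ⟨ε, hε, by rw [hyx, ← hl, hlε]⟩

theorem stdVec_eq_single {V : Type*} [DecidableEq V] (u : V) :
    stdVec u = (Pi.single u 1 : V → ℂ) := by
  unfold stdVec
  congr!

theorem star_stdVec {V : Type*} (u : V) : star (stdVec u) = stdVec u := by
  classical
  rw [stdVec_eq_single, ← Pi.single_star, star_one]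

theorem transMatrix_eq_exp {V : Type*} [Fintype V] [DecidableEq V] (A : Matrix V V ℂ) (t : ℝ) :
    transMatrix A t = NormedSpace.exp ((Complex.I * t) • A) := by
  unfold transMatrix
  congr!

/-- if QFR occurs then `E_r e_v = (-Re(α/β) ± √(Re(α/β)² + 1)) E_r e_u`
for all `r`. -/
theorem qfr_projection_ratio {V : Type*} [Fintype V] [DecidableEq V]
    (G : SimpleGraph V)
    (K : ℕ) (θ : Fin K → ℝ) (E : Fin K → Matrix V V ℂ)
    (hdist : Function.Injective θ)
    (hherm : ∀ r, (E r).IsHermitian)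
    (horth : ∀ r s, r ≠ s → E r * E s = 0)
    (hidem : ∀ r, E r * E r = E r)
    (hsum : ∑ r, E r = (1 : Matrix V V ℂ))
    (hspec : ∑ r, (θ r : ℂ) • E r = adjMat G)
    (u v : V) (t : ℝ) (h : hasQFR (adjMat G) u v t) :
    ∃ α β : ℂ, β ≠ 0 ∧ ‖α‖ ^ 2 + ‖β‖ ^ 2 = 1 ∧
      ∀ r, ∃ ε : ℝ, (ε = 1 ∨ ε = -1) ∧
        E r *ᵥ stdVec v =
          (((-(α / β).re + ε * Real.sqrt ((α / β).re ^ 2 + 1) : ℝ) : ℂ)) •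
            (E r *ᵥ stdVec u) := by
  obtain ⟨huv, α, β, hβ, hqfr⟩ := h
  have hE : CompleteOrthogonalIdempotents E := ⟨⟨hidem, fun r s ↦ horth r s⟩, hsum⟩
  have hA : (adjMat G).IsHermitian := by classical exact G.isHermitian_adjMatrix ℂ
  have hAT : (adjMat G)ᵀ = adjMat G := by classical exact G.transpose_adjMatrix
  have hU : transMatrix (adjMat G) t ∈ unitaryGroup V ℂ := by
    rw [transMatrix_eq_exp]; exact exp_I_mul_smul_mem_unitaryGroup hA t
  have hnorm : ‖α‖ ^ 2 + ‖β‖ ^ 2 = 1 :=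
    norm_sq_add_norm_sq_eq_one_of_mulVec_single hU huv (by simpa only [stdVec_eq_single] using hqfr)
  refine ⟨α, β, hβ, hnorm, fun r ↦ ?_⟩
  have hET : (E r)ᵀ = E r :=
    transpose_eq_self_of_sum_smul_eq hAT hE (Complex.ofReal_injective.comp hdist) hspec r
  have hEU : E r * transMatrix (adjMat G) t = Complex.exp ((t * θ r : ℝ) * Complex.I) • E r := by
    rw [transMatrix_eq_exp]
    apply mul_exp_of_mul_eq_smul
    rw [mul_smul_comm, ← hspec, hE.mul_sum_smul, smul_smul]
    congr 1
    push_cast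
    ring
  refine exists_sign_of_smul_eq_smul_add_smul (star_mulVec_eq_self (hherm r) hET (star_stdVec u))
    (star_mulVec_eq_self (hherm r) hET (star_stdVec v)) hβ hnorm
    (Complex.norm_exp_ofReal_mul_I (t * θ r)) ?_
  rw [← smul_mulVec, ← hEU, ← mulVec_mulVec, hqfr, mulVec_add, mulVec_smul, mulVec_smul]
end

section
/- Let R be a finite commutative ring with identity. If quantum fractional revival occurs in the unitary Cayley graph G_R from some vertex to another at some time, then the cardinality of R is even. -/
open Matrix

/-! Translations `x ↦ x + c` are automorphisms of the unitary Cayley graph, and `exp` commutes with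
simultaneous permutation of rows and columns, so the transition matrix `H = H(t)` is symmetric and
translation invariant. If column `u` of `H` is `α e_u + β e_v`, translating by `c = u - v` and
transposing give `H (u + c) u = H u v = H v u = β ≠ 0`, so `u + c ∈ {u, v}`; as `c ≠ 0`, this
forces `c + c = 0`, an element of additive order two, whence `|R|` is even. -/

theorem Matrix.exp_submatrix_perm {n : Type*} [Fintype n] [DecidableEq n] (e : Equiv.Perm n)
    (A : Matrix n n ℂ) :
    NormedSpace.exp (A.submatrix e e) = (NormedSpace.exp A).submatrix e e := by
  -- `exp` does not depend on the norm, so any normed-algebra structure on matrices will do.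
  let : SeminormedRing (Matrix n n ℂ) := Matrix.linftyOpSemiNormedRing
  let : NormedRing (Matrix n n ℂ) := Matrix.linftyOpNormedRing
  let : NormedAlgebra ℂ (Matrix n n ℂ) := Matrix.linftyOpNormedAlgebra
  let : NormedAlgebra ℚ (Matrix n n ℂ) := Matrix.linftyOpNormedAlgebra
  exact (NormedSpace.map_exp (reindexAlgEquiv ℂ ℂ e.symm)
    (continuous_id.matrix_submatrix e e) A).symm

theorem stdVec_apply {V : Type*} [DecidableEq V] (u w : V) :
    stdVec u w = if w = u then 1 else 0 := by
  simp [stdVec, Pi.single_apply]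

theorem Matrix.mulVec_stdVec {V : Type*} [Fintype V] (M : Matrix V V ℂ) (u : V) :
    M *ᵥ stdVec u = fun w => M w u := by
  classical
  ext w
  simp [stdVec]

section transMatrix

variable {V : Type*} [Fintype V] {A : Matrix V V ℂ}

theorem Matrix.IsSymm.transMatrix (hA : A.IsSymm) (t : ℝ) : (transMatrix A t).IsSymm := by
  classical
  exact (hA.smul _).exp

theorem transMatrix_submatrix {e : Equiv.Perm V} (hA : A.submatrix e e = A) (t : ℝ) :
    (transMatrix A t).submatrix e e = transMatrix A t := by
  classical
  have hsmul : ((Complex.I * t) • A).submatrix e e = (Complex.I * t) • A :=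
    congrArg ((Complex.I * t) • ·) hA
  rw [transMatrix, ← exp_submatrix_perm, hsmul]

end transMatrix

theorem isSymm_adjMat {V : Type*} (G : SimpleGraph V) : (adjMat G).IsSymm := by
  classical
  exact G.isSymm_adjMatrix

theorem adjMat_submatrix {V : Type*} {G : SimpleGraph V} (φ : G ≃g G) :
    (adjMat G).submatrix φ φ = adjMat G := by
  ext x y
  simp only [adjMat, submatrix_apply, SimpleGraph.adjMatrix_apply]
  congr 1
  exact propext φ.map_adj_iff

theorem ucMatrix_eq_adjMat (R : Type*) [CommRing R] :
    ucMatrix R = adjMat (unitaryCayleyGraph R) :=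
  rfl

def unitaryCayleyGraph.addRight {R : Type*} [CommRing R] (c : R) :
    unitaryCayleyGraph R ≃g unitaryCayleyGraph R where
  toEquiv := Equiv.addRight c
  map_rel_iff' := by simp [unitaryCayleyGraph]

theorem add_self_eq_zero_of_mulVec_stdVec {G : Type*} [AddCommGroup G] [Fintype G]
    {M : Matrix G G ℂ} (hsymm : M.IsSymm)
    (hinv : ∀ c, M.submatrix (Equiv.addRight c) (Equiv.addRight c) = M) {u v : G}
    (huv : u ≠ v) {α β : ℂ} (hβ : β ≠ 0) (hcol : M *ᵥ stdVec u = α • stdVec u + β • stdVec v) :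
    (u - v) + (u - v) = 0 := by
  classical
  have hentry (w : G) : M w u = α * stdVec u w + β * stdVec v w := by
    simpa [mulVec_stdVec] using congrFun hcol w
  have hreflect : M (u + (u - v)) u = β :=
    calc M (u + (u - v)) u = M (u + (u - v)) (v + (u - v)) := by rw [add_sub_cancel]
      _ = M u v := congrFun (congrFun (hinv (u - v)) u) v
      _ = M v u := hsymm.apply v u
      _ = β := by simp [hentry, stdVec_apply, huv.symm]
  by_contra h
  have hne_u : u + (u - v) ≠ u := by simpa [sub_eq_zero] using huv
  have hne_v : u + (u - v) ≠ v := fun h' => h (by rw [← sub_eq_zero.mpr h']; abel)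
  simp [hentry, stdVec_apply, hne_u, hne_v, hβ.symm] at hreflect

theorem even_card_of_add_self_eq_zero {G : Type*} [AddGroup G] [Fintype G] {c : G}
    (hc : c ≠ 0) (h : c + c = 0) : Even (Fintype.card G) := by
  have : addOrderOf c = 2 := addOrderOf_eq_prime (by rwa [two_nsmul]) hc
  exact even_iff_two_dvd.mpr (this ▸ addOrderOf_dvd_card)

/-- if QFR occurs in the unitary Cayley graph of a finite commutative ring
`R`, then `|R|` is even. -/
theorem qfr_card_even (R : Type*) [CommRing R] [Fintype R]
    (h : ∃ u v t, hasQFR (ucMatrix R) u v t) :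
    Even (Fintype.card R) := by
  obtain ⟨u, v, t, huv, α, β, hβ, hcol⟩ := h
  have hinv (c : R) :
      (ucMatrix R).submatrix (Equiv.addRight c) (Equiv.addRight c) = ucMatrix R :=
    adjMat_submatrix (unitaryCayleyGraph.addRight c)
  have hsymm : (transMatrix (ucMatrix R) t).IsSymm :=
    (ucMatrix_eq_adjMat R ▸ isSymm_adjMat _).transMatrix t
  exact even_card_of_add_self_eq_zero (sub_ne_zero.mpr huv)
    (add_self_eq_zero_of_mulVec_stdVec hsymm (fun c => transMatrix_submatrix (hinv c) t)
      huv hβ hcol)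
end
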